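/- arXiv:1809.03479 — 2 statements merged into one kernel-verified Lean document; each statement's English description precedes it below -/
import Mathlib

section
/- Fix h1 > 0, α ∈ (0,1], A > 0, b ≥ 0, and define f(t) = (1/2)·log(1 + 2·h1²·α²·A²/(π·e)) − (1/2)·log((1 + he²·α²·A²/3 + t/3)/(1 + 2·t/(π·e))) for t ≥ 0, where he > 0. Then f is strictly increasing on [0,∞) if and only if he²·α²·A² > π·e/2 − 3. -/
/-!
Up to an additive constant, `f = -½ log g` with `g t = (1 + c/3 + t/3) / (1 + 2t/(πe))`,
`c = he²α²A² ≥ 0`, so `f` is strictly increasing exactly when the positive linear-fractional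
map `g` is strictly decreasing on `[0, ∞)`. For `(p + q t)/(r + s t)` with `r > 0, s ≥ 0` the
difference quotient has the constant sign of `q r - p s`, so this happens iff
`1/3 < 2(1 + c/3)/(πe)`, i.e. `2c + 6 > πe`.
-/

open Real Set

lemma strictMonoOn_const_sub_mul_iff {s : Set ℝ} {h : ℝ → ℝ} (C : ℝ) {k : ℝ} (hk : 0 < k) :
    StrictMonoOn (fun x => C - k * h x) s ↔ StrictAntiOn h s :=
  forall₂_congr fun _ _ => forall₂_congr fun _ _ => imp_congr_right fun _ => by
    rw [sub_lt_sub_iff_left, mul_lt_mul_iff_right₀ hk]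

lemma strictAntiOn_log_comp_iff {s : Set ℝ} {g : ℝ → ℝ} (hg : ∀ x ∈ s, 0 < g x) :
    StrictAntiOn (fun x => log (g x)) s ↔ StrictAntiOn g s :=
  forall₂_congr fun a ha => forall₂_congr fun b hb => imp_congr_right fun _ =>
    log_lt_log_iff (hg b hb) (hg a ha)

lemma div_affine_sub_div_affine {p q r s t u : ℝ} (ht : r + s * t ≠ 0) (hu : r + s * u ≠ 0) :
    (p + q * t) / (r + s * t) - (p + q * u) / (r + s * u) =
      (p * s - q * r) * ((u - t) / ((r + s * t) * (r + s * u))) := by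
  rw [div_sub_div _ _ ht hu, mul_div_assoc']
  ring

lemma div_affine_lt_div_affine_iff {p q r s t u : ℝ} (hr : 0 < r) (hs : 0 ≤ s) (ht : 0 ≤ t)
    (htu : t < u) :
    (p + q * u) / (r + s * u) < (p + q * t) / (r + s * t) ↔ q * r < p * s := by
  have hDt : 0 < r + s * t := by positivity
  have hDu : 0 < r + s * u := by nlinarith
  have hX : 0 < (u - t) / ((r + s * t) * (r + s * u)) := div_pos (sub_pos.2 htu) (by positivity)
  rw [← sub_pos, div_affine_sub_div_affine hDt.ne' hDu.ne', mul_pos_iff_of_pos_right hX, sub_pos]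

lemma strictAntiOn_div_affine_iff {p q r s : ℝ} (hr : 0 < r) (hs : 0 ≤ s) :
    StrictAntiOn (fun t => (p + q * t) / (r + s * t)) (Ici 0) ↔ q * r < p * s :=
  ⟨fun h => (div_affine_lt_div_affine_iff hr hs le_rfl zero_lt_one).1
      (h (mem_Ici.2 le_rfl) (mem_Ici.2 zero_le_one) zero_lt_one),
    fun h _ ht _ _ htu => (div_affine_lt_div_affine_iff hr hs ht htu).2 h⟩

theorem jamming_strong_user_rate_increasing_iff_general
    (h1 he α A : ℝ)
    (f : ℝ → ℝ)
    (hf : ∀ t, f t = (1 / 2) * Real.log (1 + 2 * h1 ^ 2 * α ^ 2 * A ^ 2 / (π * exp 1)) -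
        (1 / 2) * Real.log ((1 + he ^ 2 * α ^ 2 * A ^ 2 / 3 + t / 3) /
          (1 + 2 * t / (π * exp 1)))) :
    StrictMonoOn f (Set.Ici 0) ↔ he ^ 2 * α ^ 2 * A ^ 2 > π * exp 1 / 2 - 3 := by
  set c := he ^ 2 * α ^ 2 * A ^ 2
  have hπe : 0 < π * exp 1 := by positivity
  have hf' : f = fun t => (1 / 2) * log (1 + 2 * h1 ^ 2 * α ^ 2 * A ^ 2 / (π * exp 1)) -
      (1 / 2) * log ((1 + c / 3 + 1 / 3 * t) / (1 + 2 / (π * exp 1) * t)) := by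
    funext t
    rw [hf]
    ring_nf
  have hpos : ∀ t ∈ Ici (0 : ℝ), 0 < (1 + c / 3 + 1 / 3 * t) / (1 + 2 / (π * exp 1) * t) :=
    fun t (ht : 0 ≤ t) => by positivity
  rw [hf', strictMonoOn_const_sub_mul_iff _ one_half_pos, strictAntiOn_log_comp_iff hpos,
    strictAntiOn_div_affine_iff one_pos (by positivity), mul_div_assoc', lt_div_iff₀ hπe]
  constructor <;> intro <;> linarith

theorem jamming_strong_user_rate_increasing_iff
    (h1 he α A b : ℝ)
    (hh1 : 0 < h1) (hhe : 0 < he)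
    (hα : α ∈ Set.Ioc (0 : ℝ) 1) (hA : 0 < A) (hb : 0 ≤ b)
    (f : ℝ → ℝ)
    (hf : ∀ t, f t = (1 / 2) * Real.log (1 + 2 * h1 ^ 2 * α ^ 2 * A ^ 2 / (π * exp 1)) -
        (1 / 2) * Real.log ((1 + he ^ 2 * α ^ 2 * A ^ 2 / 3 + t / 3) /
          (1 + 2 * t / (π * exp 1)))) :
    StrictMonoOn f (Set.Ici 0) ↔ he ^ 2 * α ^ 2 * A ^ 2 > π * exp 1 / 2 - 3 :=
  jamming_strong_user_rate_increasing_iff_general h1 he α A f hf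
end

section
/- Fix h2, he > 0, α ∈ [0,1), A > 0, and define g(t) = (1/2)·log((1 + 2·h2²·A²/(π·e))/(1 + h2²·α²·A²/3)) − (1/2)·log((1 + he²·A²/3 + t/3)/(1 + 2·he²·α²·A²/(π·e) + 2·t/(π·e))) for t ≥ 0. Then g is strictly increasing on [0,∞) if and only if he²·(1 − α²)·A² > π·e/2 − 3. -/
open Real

theorem jamming_weak_user_rate_increasing_iff
    (h2 he α A : ℝ)
    (hh2 : 0 < h2) (hhe : 0 < he)
    (hα : α ∈ Set.Ico (0 : ℝ) 1) (hA : 0 < A)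
    (g : ℝ → ℝ)
    (hg : ∀ t, g t = (1 / 2) * Real.log ((1 + 2 * h2 ^ 2 * A ^ 2 / (π * exp 1)) /
          (1 + h2 ^ 2 * α ^ 2 * A ^ 2 / 3)) -
        (1 / 2) * Real.log ((1 + he ^ 2 * A ^ 2 / 3 + t / 3) /
          (1 + 2 * he ^ 2 * α ^ 2 * A ^ 2 / (π * exp 1) + 2 * t / (π * exp 1)))) :
    StrictMonoOn g (Set.Ici 0) ↔ he ^ 2 * (1 - α ^ 2) * A ^ 2 > π * exp 1 / 2 - 3 := by
  obtain ⟨hα0, hα1⟩ := hα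
  have hP : 0 < π * exp 1 := mul_pos pi_pos (exp_pos 1)
  have hPne : π * exp 1 ≠ 0 := ne_of_gt hP
  have hQ : (0:ℝ) ≤ he ^ 2 * A ^ 2 := by positivity
  have hQα : (0:ℝ) ≤ he ^ 2 * α ^ 2 * A ^ 2 := by positivity
  obtain ⟨K, hKdef⟩ : ∃ K : ℝ, K = (1 + he ^ 2 * A ^ 2 / 3) * (2 / (π * exp 1)) -
      (1 + 2 * he ^ 2 * α ^ 2 * A ^ 2 / (π * exp 1)) / 3 := ⟨_, rfl⟩
  have hnum : ∀ t : ℝ, 0 ≤ t → 0 < 1 + he ^ 2 * A ^ 2 / 3 + t / 3 := by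
    intro t ht; nlinarith
  have hden : ∀ t : ℝ, 0 ≤ t →
      0 < 1 + 2 * he ^ 2 * α ^ 2 * A ^ 2 / (π * exp 1) + 2 * t / (π * exp 1) := by
    intro t ht
    have h1 : 0 ≤ 2 * he ^ 2 * α ^ 2 * A ^ 2 / (π * exp 1) := by positivity
    have h2' : 0 ≤ 2 * t / (π * exp 1) := by positivity
    linarith
  have key : ∀ s t : ℝ, 0 ≤ s → 0 ≤ t →
      (g s < g t ↔ 0 < (t - s) * K) := by
    intro s t hs ht
    rw [hg, hg]
    have hRt : 0 < (1 + he ^ 2 * A ^ 2 / 3 + t / 3) /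
        (1 + 2 * he ^ 2 * α ^ 2 * A ^ 2 / (π * exp 1) + 2 * t / (π * exp 1)) :=
      div_pos (hnum t ht) (hden t ht)
    have hRs : 0 < (1 + he ^ 2 * A ^ 2 / 3 + s / 3) /
        (1 + 2 * he ^ 2 * α ^ 2 * A ^ 2 / (π * exp 1) + 2 * s / (π * exp 1)) :=
      div_pos (hnum s hs) (hden s hs)
    have hring : (1 + he ^ 2 * A ^ 2 / 3 + s / 3) *
          (1 + 2 * he ^ 2 * α ^ 2 * A ^ 2 / (π * exp 1) + 2 * t / (π * exp 1)) -
        (1 + he ^ 2 * A ^ 2 / 3 + t / 3) *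
          (1 + 2 * he ^ 2 * α ^ 2 * A ^ 2 / (π * exp 1) + 2 * s / (π * exp 1)) =
        (t - s) * K := by
      rw [hKdef]; ring
    constructor
    · intro h
      have hlog : Real.log ((1 + he ^ 2 * A ^ 2 / 3 + t / 3) /
          (1 + 2 * he ^ 2 * α ^ 2 * A ^ 2 / (π * exp 1) + 2 * t / (π * exp 1))) <
          Real.log ((1 + he ^ 2 * A ^ 2 / 3 + s / 3) /
          (1 + 2 * he ^ 2 * α ^ 2 * A ^ 2 / (π * exp 1) + 2 * s / (π * exp 1))) := by
        linarith
      have hlt := (Real.log_lt_log_iff hRt hRs).mp hlog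
      have hcross := (div_lt_div_iff₀ (hden t ht) (hden s hs)).mp hlt
      linarith [hring, hcross]
    · intro h
      have hcross : (1 + he ^ 2 * A ^ 2 / 3 + t / 3) *
            (1 + 2 * he ^ 2 * α ^ 2 * A ^ 2 / (π * exp 1) + 2 * s / (π * exp 1)) <
          (1 + he ^ 2 * A ^ 2 / 3 + s / 3) *
            (1 + 2 * he ^ 2 * α ^ 2 * A ^ 2 / (π * exp 1) + 2 * t / (π * exp 1)) := by
        linarith [hring]
      have hdiv := (div_lt_div_iff₀ (hden t ht) (hden s hs)).mpr hcross
      have hlog := Real.log_lt_log hRt hdiv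
      linarith
  have hK : K = 2 * (he ^ 2 * (1 - α ^ 2) * A ^ 2 - (π * exp 1 / 2 - 3)) /
      (3 * (π * exp 1)) := by
    rw [hKdef]; field_simp; ring
  have hKiff : 0 < K ↔ he ^ 2 * (1 - α ^ 2) * A ^ 2 > π * exp 1 / 2 - 3 := by
    rw [hK, div_pos_iff]
    constructor
    · rintro (⟨h, _⟩ | ⟨_, h⟩)
      · linarith
      · linarith
    · intro h
      exact Or.inl ⟨by linarith, by positivity⟩
  constructor
  · intro hmono
    have h01 : g 0 < g 1 := hmono (by simp) (by norm_num) (by norm_num)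
    have h := (key 0 1 le_rfl zero_le_one).mp h01
    exact hKiff.mp (by linarith)
  · intro hcond s hs t ht hst
    rw [key s t hs ht]
    exact mul_pos (sub_pos.mpr hst) (hKiff.mpr hcond)
end
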